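/- Let A be a commutative noetherian ring, S a multiplicative subset, J a finite poset, C a full subcategory of Fun(J, ModFG A), and let w = Isom_{S,C} be the class of morphisms f of C whose objectwise localization L(f) is an isomorphism. Then a morphism f : x → y in C belongs to w if and only if there exist a morphism g : y → x in Fun(J, ModFG A) landing appropriately and elements s, t, u ∈ S such that (f∘g)·t = (s·t)·id_y and (g∘f)·u = (s·u)·id_x. -/

import Mathlib

section Diagrams

variable (R : Type) [CommRing R] (J : Type) [PartialOrder J]

/-- A `J`-indexed diagram of `R`-modules (a functor from the poset `J` to `R`-modules). -/
structure Diagram where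
  M : J → Type
  [acg : ∀ j, AddCommGroup (M j)]
  [mod : ∀ j, Module R (M j)]
  map : ∀ {j k : J}, j ≤ k → (M j →ₗ[R] M k)
  map_refl : ∀ j : J, map (le_refl j) = LinearMap.id
  map_trans : ∀ {i j k : J} (h : i ≤ j) (h' : j ≤ k),
    map (le_trans h h') = (map h').comp (map h)

attribute [instance] Diagram.acg Diagram.mod

variable {R J}

/-- A family of linear maps is a morphism of diagrams when it is natural. -/
def IsDiagramHom (x y : Diagram R J) (f : ∀ j, x.M j →ₗ[R] y.M j) : Prop :=
  ∀ (j k : J) (h : j ≤ k), (y.map h).comp (f j) = (f k).comp (x.map h)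

/-- Composition of families of linear maps. -/
def diagComp {x y z : Diagram R J} (g : ∀ j, y.M j →ₗ[R] z.M j)
    (f : ∀ j, x.M j →ₗ[R] y.M j) : ∀ j, x.M j →ₗ[R] z.M j :=
  fun j => (g j).comp (f j)

/-- The identity morphism of a diagram. -/
def diagId (x : Diagram R J) : ∀ j, x.M j →ₗ[R] x.M j := fun _ => LinearMap.id

end Diagrams

section Localized

variable {A : Type} [CommRing A] (S : Submonoid A) {J : Type} [PartialOrder J]

/-- The localization of a linear map, as a map between localized modules. -/
noncomputable def locMap {M N : Type} [AddCommGroup M] [Module A M] [AddCommGroup N]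
    [Module A N] (f : M →ₗ[A] N) : LocalizedModule S M →ₗ[A] LocalizedModule S N :=
  IsLocalizedModule.map S (LocalizedModule.mkLinearMap S M)
    (LocalizedModule.mkLinearMap S N) f

/-- The objectwise localization of a diagram of modules. -/
noncomputable def locDiagram (x : Diagram A J) : Diagram A J where
  M j := LocalizedModule S (x.M j)
  map h := locMap S (x.map h)
  map_refl j := by
    show locMap S (x.map (le_refl j)) = LinearMap.id
    rw [x.map_refl j]
    exact IsLocalizedModule.map_id S _
  map_trans h h' := by
    show locMap S (x.map (le_trans h h')) = LinearMap.comp _ _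
    rw [x.map_trans h h']
    exact IsLocalizedModule.map_comp' S _ _ _ _ _

/-- A morphism of diagrams is a weak isomorphism (belongs to `w = Isom_{S,C}`) when its
objectwise localization is an isomorphism, i.e. bijective in each component. -/
noncomputable def IsLocIso (x y : Diagram A J) (f : ∀ j, x.M j →ₗ[A] y.M j) : Prop :=
  ∀ j, Function.Bijective (locMap S (f j))

end Localized

/-!
Since `A` is noetherian, every component of `x` and `y` is finitely presented, so `Hom` localizes:
`S⁻¹ Hom(M, N) ≃ Hom(S⁻¹M, S⁻¹N)`. Hence the componentwise inverse of `L(f)` lifts, after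
multiplication by an element of `S`, to a family `g` of linear maps, and every identity between
localized maps already holds before localization once multiplied by a suitable element of `S`.
As `J` is finite, the finitely many elements of `S` so obtained can be replaced by their product;
this makes `g` natural and yields the relations with the identities. Conversely, these relations
show that `L(f)` is invertible up to the automorphism `s • id` of the localized modules.
-/

theorem Submonoid.exists_mem_forall_of_finite {M : Type*} [CommMonoid M] (S : Submonoid M)
    {ι : Type*} [Finite ι] {P : ι → M → Prop} (hP : ∀ i, ∀ b ∈ S, ∀ a, P i a → P i (b * a))
    (h : ∀ i, ∃ a ∈ S, P i a) : ∃ a ∈ S, ∀ i, P i a := by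
  classical
  cases nonempty_fintype ι
  choose a haS ha using h
  refine ⟨∏ i, a i, S.prod_mem fun i _ => haS i, fun i => ?_⟩
  rw [← Finset.prod_erase_mul _ _ (Finset.mem_univ i)]
  exact hP i _ (S.prod_mem fun k _ => haS k) _ (ha i)

section LocMap

variable {A : Type} [CommRing A] (S : Submonoid A) {M N P : Type}
  [AddCommGroup M] [Module A M] [AddCommGroup N] [Module A N] [AddCommGroup P] [Module A P]

theorem locMap_smul (a : A) (f : M →ₗ[A] N) : locMap S (a • f) = a • locMap S f :=
  map_smul _ a f

theorem locMap_comp (f : M →ₗ[A] N) (g : N →ₗ[A] P) :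
    locMap S (g ∘ₗ f) = locMap S g ∘ₗ locMap S f :=
  IsLocalizedModule.map_comp' S _ _ _ _ _

theorem locMap_id : locMap S (LinearMap.id : M →ₗ[A] M) = LinearMap.id :=
  IsLocalizedModule.map_id S _

theorem smul_id_bijective_localizedModule {s : A} (hs : s ∈ S) :
    Function.Bijective (s • LinearMap.id : LocalizedModule S M →ₗ[A] LocalizedModule S M) := by
  rw [← Module.algebraMap_end_eq_smul_id, ← Module.End.isUnit_iff]
  exact IsLocalizedModule.map_units (LocalizedModule.mkLinearMap S M) ⟨s, hs⟩

theorem locMap_eq_of_smul_eq {t : A} (ht : t ∈ S) {f g : M →ₗ[A] N} (h : t • f = t • g) :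
    locMap S f = locMap S g := by
  have h' := congrArg (locMap S) h
  rw [locMap_smul, locMap_smul] at h'
  ext v
  exact (smul_id_bijective_localizedModule S ht).1 (LinearMap.congr_fun h' v)

-- For finitely presented `M`, `locMap S` is itself a localization map
-- (`Module.FinitePresentation.isLocalizedModule_map`).
theorem exists_smul_eq_of_locMap_eq [Module.FinitePresentation A M] {f g : M →ₗ[A] N}
    (h : locMap S f = locMap S g) : ∃ t ∈ S, t • f = t • g := by
  obtain ⟨⟨t, ht⟩, h⟩ := IsLocalizedModule.exists_of_eq (S := S) h
  exact ⟨t, ht, h⟩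

theorem exists_locMap_eq_smul [Module.FinitePresentation A M]
    (φ : LocalizedModule S M →ₗ[A] LocalizedModule S N) :
    ∃ s ∈ S, ∃ g : M →ₗ[A] N, locMap S g = s • φ := by
  obtain ⟨⟨g, ⟨s, hs⟩⟩, h⟩ := IsLocalizedModule.surj S (IsLocalizedModule.map S
    (LocalizedModule.mkLinearMap S M) (LocalizedModule.mkLinearMap S N)) φ
  exact ⟨s, hs, g, h.symm⟩

theorem locMap_comp_eq_smul_id {f : M →ₗ[A] N} {g : N →ₗ[A] M} {s t : A} (ht : t ∈ S)
    (h : t • (f ∘ₗ g) = (s * t) • LinearMap.id) :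
    locMap S f ∘ₗ locMap S g = s • LinearMap.id := by
  rw [← locMap_comp, locMap_eq_of_smul_eq S ht (g := s • LinearMap.id), locMap_smul, locMap_id]
  rw [h, smul_smul, mul_comm]

theorem exists_smul_comp_eq_of_locMap_comp [Module.FinitePresentation A N] {f : M →ₗ[A] N}
    {g : N →ₗ[A] M} {s : A} (h : locMap S f ∘ₗ locMap S g = s • LinearMap.id) :
    ∃ t ∈ S, t • (f ∘ₗ g) = (s * t) • LinearMap.id := by
  obtain ⟨t, ht, h⟩ := exists_smul_eq_of_locMap_eq S (f := f ∘ₗ g) (g := s • LinearMap.id)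
    (by rw [locMap_comp, h, locMap_smul, locMap_id])
  exact ⟨t, ht, by rw [h, smul_smul, mul_comm]⟩

theorem locMap_bijective_of_quasi_inverse {f : M →ₗ[A] N} {g : N →ₗ[A] M} {s t u : A}
    (hs : s ∈ S) (ht : t ∈ S) (hu : u ∈ S) (hfg : t • (f ∘ₗ g) = (s * t) • LinearMap.id)
    (hgf : u • (g ∘ₗ f) = (s * u) • LinearMap.id) : Function.Bijective (locMap S f) := by
  have hfg' := congrArg DFunLike.coe (locMap_comp_eq_smul_id S ht hfg)
  have hgf' := congrArg DFunLike.coe (locMap_comp_eq_smul_id S hu hgf)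
  rw [LinearMap.coe_comp] at hfg' hgf'
  exact ⟨.of_comp (f := locMap S g) (hgf' ▸ (smul_id_bijective_localizedModule S hs).1),
    .of_comp (hfg' ▸ (smul_id_bijective_localizedModule S hs).2)⟩

end LocMap

section Diagrams

variable {R : Type} [CommRing R] {J : Type} [PartialOrder J]

theorem IsDiagramHom.smul {x y : Diagram R J} {f : ∀ j, x.M j →ₗ[R] y.M j}
    (hf : IsDiagramHom x y f) (a : R) : IsDiagramHom x y fun j => a • f j := by
  intro j k h
  rw [LinearMap.comp_smul, LinearMap.smul_comp, hf j k h]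

theorem isDiagramHom_symm {x y : Diagram R J} (e : ∀ j, x.M j ≃ₗ[R] y.M j)
    (he : IsDiagramHom x y fun j => (e j).toLinearMap) :
    IsDiagramHom y x fun j => (e j).symm.toLinearMap := by
  intro j k h
  ext v
  apply (e k).injective
  simpa using (LinearMap.congr_fun (he j k h) ((e j).symm v)).symm

end Diagrams

section LocalizedDiagrams

variable {A : Type} [CommRing A] (S : Submonoid A) {J : Type} [PartialOrder J]

theorem IsDiagramHom.localize {x y : Diagram A J} {f : ∀ j, x.M j →ₗ[A] y.M j}
    (hf : IsDiagramHom x y f) :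
    IsDiagramHom (locDiagram S x) (locDiagram S y) fun j => locMap S (f j) := by
  intro j k h
  change locMap S (y.map h) ∘ₗ locMap S (f j) = locMap S (f k) ∘ₗ locMap S (x.map h)
  rw [← locMap_comp, ← locMap_comp, hf j k h]

theorem exists_smul_isDiagramHom_of_locMap [Finite J] {x y : Diagram A J}
    [∀ j, Module.FinitePresentation A (x.M j)] {g : ∀ j, x.M j →ₗ[A] y.M j}
    (hg : IsDiagramHom (locDiagram S x) (locDiagram S y) fun j => locMap S (g j)) :
    ∃ c ∈ S, IsDiagramHom x y fun j => c • g j := by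
  have hpair (j k : J) : ∃ c ∈ S, ∀ h : j ≤ k, c • (y.map h ∘ₗ g j) = c • (g k ∘ₗ x.map h) := by
    by_cases h : j ≤ k
    · obtain ⟨t, ht, heq⟩ := exists_smul_eq_of_locMap_eq S (f := y.map h ∘ₗ g j)
        (g := g k ∘ₗ x.map h) (by rw [locMap_comp, locMap_comp]; exact hg j k h)
      exact ⟨t, ht, fun _ => heq⟩
    · exact ⟨1, S.one_mem, fun h' => absurd h' h⟩
  obtain ⟨c, hc, hnat⟩ := S.exists_mem_forall_of_finite
    (P := fun (p : J × J) c => ∀ h : p.1 ≤ p.2, c • (y.map h ∘ₗ g p.1) = c • (g p.2 ∘ₗ x.map h))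
    (fun _ b _ a ha h => by rw [mul_smul, ha h, ← mul_smul]) fun p => hpair p.1 p.2
  refine ⟨c, hc, fun j k h => ?_⟩
  rw [LinearMap.comp_smul, LinearMap.smul_comp, hnat (j, k) h]

theorem IsLocIso.exists_quasi_inverse [Finite J] {x y : Diagram A J}
    [∀ j, Module.FinitePresentation A (x.M j)] [∀ j, Module.FinitePresentation A (y.M j)]
    {f : ∀ j, x.M j →ₗ[A] y.M j} (hf : IsDiagramHom x y f) (hloc : IsLocIso S x y f) :
    ∃ g : ∀ j, y.M j →ₗ[A] x.M j, IsDiagramHom y x g ∧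
      ∃ s ∈ S, ∃ t ∈ S, ∃ u ∈ S,
        (∀ j, t • ((f j).comp (g j)) = (s * t) • (LinearMap.id : y.M j →ₗ[A] y.M j)) ∧
        (∀ j, u • ((g j).comp (f j)) = (s * u) • (LinearMap.id : x.M j →ₗ[A] x.M j)) := by
  let e j := LinearEquiv.ofBijective (locMap S (f j)) (hloc j)
  obtain ⟨s, hs, hg₀⟩ := S.exists_mem_forall_of_finite
    (P := fun j s => ∃ g : y.M j →ₗ[A] x.M j, locMap S g = s • (e j).symm.toLinearMap)
    (fun j b _ a ⟨g, hg⟩ => ⟨b • g, by rw [locMap_smul, hg, mul_smul]⟩)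
    fun j => exists_locMap_eq_smul S _
  choose g₀ hg₀ using hg₀
  obtain ⟨c, hc, hg⟩ := exists_smul_isDiagramHom_of_locMap S (g := g₀)
    (by
      simp only [hg₀]
      exact (isDiagramHom_symm (x := locDiagram S x) (y := locDiagram S y) e
        (hf.localize S)).smul s)
  have hLg j : locMap S (c • g₀ j) = (c * s) • (e j).symm.toLinearMap := by
    rw [locMap_smul, hg₀, mul_smul]
  have upward {X : Type} [AddCommGroup X] [Module A X] (φ : X →ₗ[A] X) (b t : A)
      (h : t • φ = (c * s * t) • LinearMap.id) :
      (b * t) • φ = (c * s * (b * t)) • LinearMap.id := by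
    rw [mul_smul, h, smul_smul, mul_left_comm]
  obtain ⟨t, ht, hfg⟩ := S.exists_mem_forall_of_finite
    (P := fun j t => t • (f j ∘ₗ (c • g₀ j)) = (c * s * t) • LinearMap.id)
    (fun _ b _ => upward _ b) fun j => exists_smul_comp_eq_of_locMap_comp S <| by
      rw [hLg, LinearMap.comp_smul]; exact congrArg _ (e j).comp_symm
  obtain ⟨u, hu, hgf⟩ := S.exists_mem_forall_of_finite
    (P := fun j u => u • ((c • g₀ j) ∘ₗ f j) = (c * s * u) • LinearMap.id)
    (fun _ b _ => upward _ b) fun j => exists_smul_comp_eq_of_locMap_comp S <| by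
      rw [hLg, LinearMap.smul_comp]; exact congrArg _ (e j).symm_comp
  exact ⟨_, hg, c * s, mul_mem hc hs, t, ht, u, hu, hfg, hgf⟩

end LocalizedDiagrams

/-- a morphism `f : x → y` of a full subcategory `C` of diagrams of finitely
generated modules is inverted by localization at `S` iff there are `g : y → x` and
`s, t, u ∈ S` with `(f ∘ g)·t = (s·t)·id` and `(g ∘ f)·u = (s·u)·id`. -/
theorem isLocIso_iff_exists_quasi_inverse
    (A : Type) [CommRing A] [IsNoetherianRing A] (S : Submonoid A)
    (ι : Type) [Fintype ι] (I : ι → Type) [∀ i, Fintype (I i)] [∀ i, LinearOrder (I i)]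
    (P : Diagram A (∀ i, I i) → Prop)
    (hfin : ∀ z, P z → ∀ j, Module.Finite A (z.M j))
    (x y : Diagram A (∀ i, I i)) (hx : P x) (hy : P y)
    (f : ∀ j, x.M j →ₗ[A] y.M j) (hf : IsDiagramHom x y f) :
    IsLocIso S x y f ↔
      ∃ g : ∀ j, y.M j →ₗ[A] x.M j, IsDiagramHom y x g ∧
        ∃ s ∈ S, ∃ t ∈ S, ∃ u ∈ S,
          (∀ j, t • ((f j).comp (g j)) = (s * t) • (LinearMap.id : y.M j →ₗ[A] y.M j)) ∧
          (∀ j, u • ((g j).comp (f j)) = (s * u) • (LinearMap.id : x.M j →ₗ[A] x.M j)) := by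
  have hfp (z) (hz : P z) (j) : Module.FinitePresentation A (z.M j) :=
    have := hfin z hz j
    Module.finitePresentation_of_finite A _
  have := hfp x hx
  have := hfp y hy
  constructor
  · exact IsLocIso.exists_quasi_inverse S hf
  · rintro ⟨g, -, s, hs, t, ht, u, hu, hfg, hgf⟩ j
    exact locMap_bijective_of_quasi_inverse S hs ht hu (hfg j) (hgf j)
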